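/- Let x ∈ (0,1), α > 0, n ≥ 1 an integer, and let {B_1,…,B_H} be any partition of {1,…,n} into H nonempty blocks with sizes n_h = #B_h. On a probability space let E_1,…,E_n, G* be jointly independent real random variables with E_i distributed Gamma(1, 1) (i.e., standard exponential) and G* distributed Gamma(α, 1). Set T = G* + Σ_{i=1}^n E_i, w_i = E_i/T for i ∈ {1,…,n}, and π_h = (Σ_{i ∈ B_h} E_i)/T for h ∈ {1,…,H}. Then E[ ∏_{i=1}^n max(1 − x/w_i, 0) ] ≤ E[ ∏_{h=1}^H (max(1 − x/π_h, 0))^{n_h} ]. (Equivalently: among all partitions of [n], the singleton partition yields the lowest survival probability P(u_min > x) of the minimum slice variable under the Dirichlet posterior law of the weights.) -/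

import Mathlib

/-!
Almost surely every `E_i` and `G*` is positive, so `T > 0` and `w_i ≤ π_h` whenever `i ∈ B_h`.
For `x ≥ 0` the map `w ↦ (1 - x/w)₊` is nondecreasing on `w > 0` with values in `[0, 1]`, so
each factor `(1 - x/w_i)₊` with `i ∈ B_h` is at most `(1 - x/π_h)₊`, and dropping factors of
indices outside every block can only increase the product. The inequality therefore holds
pointwise almost surely, and integrating it gives the claim.
-/

open MeasureTheory ProbabilityTheory Finset Function

lemma gammaMeasure_Iic_zero (a r : ℝ) : gammaMeasure a r (Set.Iic 0) = 0 := by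
  rw [gammaMeasure, withDensity_apply _ measurableSet_Iic,
    setLIntegral_congr Iio_ae_eq_Iic.symm,
    setLIntegral_congr_fun measurableSet_Iio fun _ hy => gammaPDF_of_neg hy]
  simp

lemma ae_pos_of_map_eq_gammaMeasure {Ω : Type*} [MeasurableSpace Ω] {P : Measure Ω}
    {X : Ω → ℝ} (hX : Measurable X) {a r : ℝ} (h : P.map X = gammaMeasure a r) :
    ∀ᵐ ω ∂P, 0 < X ω := by
  have hnull : P (X ⁻¹' Set.Iic 0) = 0 := by
    rw [← Measure.map_apply hX measurableSet_Iic, h, gammaMeasure_Iic_zero]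
  filter_upwards [measure_eq_zero_iff_ae_notMem.mp hnull] with ω hω
  simpa using hω

theorem Finset.prod_le_prod_pow_card_of_pairwiseDisjoint {ι κ R : Type*} [Fintype ι]
    [Fintype κ] [CommSemiring R] [PartialOrder R] [IsOrderedRing R] {f : ι → R} {g : κ → R}
    {B : κ → Finset ι} (hB : Pairwise (Disjoint on B)) (hf0 : ∀ i, 0 ≤ f i)
    (hf1 : ∀ i, f i ≤ 1) (hfg : ∀ k, ∀ i ∈ B k, f i ≤ g k) :
    ∏ i, f i ≤ ∏ k, g k ^ #(B k) := by
  classical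
  calc ∏ i, f i ≤ ∏ i ∈ univ.biUnion B, f i :=
        prod_le_prod_of_subset_of_le_one (subset_univ _) (fun i _ => hf0 i) fun i _ _ => hf1 i
    _ = ∏ k, ∏ i ∈ B k, f i := prod_biUnion (hB.set_pairwise _)
    _ ≤ ∏ k, g k ^ #(B k) := by
        refine prod_le_prod (fun k _ => prod_nonneg fun i _ => hf0 i) fun k _ => ?_
        rw [← prod_const]
        exact prod_le_prod (fun i _ => hf0 i) (hfg k)

/-- `P(U > x)` for `U ~ Uniform(0, w)` and `w > 0`. -/
noncomputable def uniformSurvival (w x : ℝ) : ℝ := max (1 - x / w) 0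

lemma uniformSurvival_nonneg (w x : ℝ) : 0 ≤ uniformSurvival w x := le_max_right _ _

lemma uniformSurvival_le_one {w x : ℝ} (hw : 0 ≤ w) (hx : 0 ≤ x) : uniformSurvival w x ≤ 1 :=
  max_le (sub_le_self 1 (div_nonneg hx hw)) zero_le_one

lemma uniformSurvival_mono {w w' x : ℝ} (hx : 0 ≤ x) (hw : 0 < w) (h : w ≤ w') :
    uniformSurvival w x ≤ uniformSurvival w' x :=
  max_le_max_right 0 (sub_le_sub_left (div_le_div_of_nonneg_left hx hw h) 1)

lemma prod_uniformSurvival_le_prod_blocks {ι κ : Type*} [Fintype ι] [Fintype κ]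
    {B : κ → Finset ι} (hB : Pairwise (Disjoint on B)) {e : ι → ℝ} (he : ∀ i, 0 < e i)
    {T x : ℝ} (hT : 0 < T) (hx : 0 ≤ x) :
    ∏ i, uniformSurvival (e i / T) x ≤ ∏ k, uniformSurvival ((∑ i ∈ B k, e i) / T) x ^ #(B k) :=
  prod_le_prod_pow_card_of_pairwiseDisjoint hB (fun _ => uniformSurvival_nonneg _ _)
    (fun i => uniformSurvival_le_one (div_nonneg (he i).le hT.le) hx) fun _ _ hi =>
      uniformSurvival_mono hx (div_pos (he _) hT)
        (div_le_div_of_nonneg_right (single_le_sum (fun j _ => (he j).le) hi) hT.le)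

theorem stmt1_general {Ω : Type*} [MeasurableSpace Ω] (P : Measure Ω) [IsProbabilityMeasure P]
    (x α : ℝ) (hx : x ∈ Set.Ioo (0:ℝ) 1)
    (n H : ℕ)
    (B : Fin H → Finset (Fin n))
    (hBdisj : ∀ h h', h ≠ h' → Disjoint (B h) (B h'))
    (E : Fin n → Ω → ℝ) (Gstar : Ω → ℝ)
    (hEm : ∀ i, Measurable (E i)) (hGsm : Measurable Gstar)
    (hEd : ∀ i, Measure.map (E i) P = gammaMeasure 1 1)
    (hGsd : Measure.map Gstar P = gammaMeasure α 1) :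
    (∫ ω, ∏ i, max (1 - x / (E i ω / (Gstar ω + ∑ j, E j ω))) 0 ∂P)
      ≤ ∫ ω, ∏ h,
          (max (1 - x / ((∑ i ∈ B h, E i ω) / (Gstar ω + ∑ j, E j ω))) 0) ^ (B h).card ∂P := by
  have hpos : ∀ᵐ ω ∂P, 0 < Gstar ω + ∑ j, E j ω ∧ ∀ i, 0 < E i ω := by
    filter_upwards [ae_pos_of_map_eq_gammaMeasure hGsm hGsd,
      ae_all_iff.mpr fun i => ae_pos_of_map_eq_gammaMeasure (hEm i) (hEd i)] with ω hG hE
    exact ⟨add_pos_of_pos_of_nonneg hG (sum_nonneg fun j _ => (hE j).le), hE⟩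
  refine integral_mono_of_nonneg
    (.of_forall fun ω => prod_nonneg fun i _ => uniformSurvival_nonneg _ _)
    (.of_bound (Measurable.aestronglyMeasurable (by fun_prop)) 1 ?_) ?_
  · filter_upwards [hpos] with ω ⟨hT, hE⟩
    refine (Real.norm_of_nonneg
      (prod_nonneg fun h _ => pow_nonneg (uniformSurvival_nonneg _ _) _)).trans_le ?_
    exact prod_le_one (fun h _ => pow_nonneg (uniformSurvival_nonneg _ _) _) fun h _ =>
      pow_le_one₀ (uniformSurvival_nonneg _ _) (uniformSurvival_le_one
        (div_nonneg (sum_nonneg fun i _ => (hE i).le) hT.le) hx.1.le)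
  · filter_upwards [hpos] with ω ⟨hT, hE⟩
    exact prod_uniformSurvival_le_prod_blocks hBdisj hE hT hx.1.le

/-- The singleton partition yields the lowest survival probability of the minimum
slice variable, via the Gamma representation: with `E_1, …, E_n ~ Gamma(1,1)`
(standard exponential), `G* ~ Gamma(α, 1)` jointly independent, `T = G* + Σ_i E_i`,
`w_i = E_i / T`, and block weights `π_h = (Σ_{i ∈ B_h} E_i)/T` for a partition
`{B_1, …, B_H}` of `{1, …, n}` into nonempty blocks:
`E[∏_i (1 − x/w_i)₊] ≤ E[∏_h ((1 − x/π_h)₊)^{#B_h}]`. -/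
theorem stmt1 {Ω : Type*} [MeasurableSpace Ω] (P : Measure Ω) [IsProbabilityMeasure P]
    (x α : ℝ) (hx : x ∈ Set.Ioo (0:ℝ) 1) (hα : 0 < α)
    (n H : ℕ) (hn : 1 ≤ n) (hH : 1 ≤ H)
    (B : Fin H → Finset (Fin n))
    (hBne : ∀ h, (B h).Nonempty)
    (hBdisj : ∀ h h', h ≠ h' → Disjoint (B h) (B h'))
    (hBcover : ∀ i, ∃ h, i ∈ B h)
    (E : Fin n → Ω → ℝ) (Gstar : Ω → ℝ)
    (hEm : ∀ i, Measurable (E i)) (hGsm : Measurable Gstar)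
    (hindep : iIndepFun
      (fun j : Option (Fin n) => Option.elim j Gstar E) P)
    (hEd : ∀ i, Measure.map (E i) P = gammaMeasure 1 1)
    (hGsd : Measure.map Gstar P = gammaMeasure α 1) :
    (∫ ω, ∏ i, max (1 - x / (E i ω / (Gstar ω + ∑ j, E j ω))) 0 ∂P)
      ≤ ∫ ω, ∏ h,
          (max (1 - x / ((∑ i ∈ B h, E i ω) / (Gstar ω + ∑ j, E j ω))) 0) ^ (B h).card ∂P :=
  stmt1_general P x α hx n H B hBdisj E Gstar hEm hGsm hEd hGsd
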